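/- Let g and h be Leibniz algebras and let L = ⊕_k C^k_>(g⊕h, h) be the graded subspace of cochains on the direct sum Leibniz algebra g⊕h with values in h that vanish when all arguments lie in h (complementary to C(h,h)). Then L is closed under the graded commutator bracket [·,·]_C and under the differential ∂̄ = [μ_g + μ_h, ·]_C, so (L, [·,·]_C, ∂̄) is a sub-DGLA of (C(g⊕h, g⊕h), [·,·]_C, ∂̄); moreover its degree-0 part L₀ = Hom(g,h) is an abelian subalgebra. -/

import Mathlib

/-! The point is that `h` is an ideal of `g ⊕ h`. For any subgroup `H` of `A`, the cochains with
values in `H` that vanish on tuples from `H` are closed under the composition `P ∘ Q`: each summand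
`P(x…, Q(x…), x…)` lies in `H`, and if all `x`'s lie in `H` then `Q(x…) = 0`, so `P` is fed a tuple
from `H`. Closure under `[μ, ·]_C` uses that `H` is an ideal for `μ`, so `μ(…, P(…), …) ∈ H` and
`μ(y…) ∈ H` when `y₀ ∈ H`. In degree 0, `(P ∘ Q)(x) = P(Q(x))` vanishes as `Q(x) ∈ H`. -/

/-- A `(k,q)`-unshuffle: a permutation of `Fin (k+q)` that is increasing on
the first `k` positions and on the last `q` positions. -/
def IsUnshuffle (k q : ℕ) (σ : Equiv.Perm (Fin (k + q))) : Prop :=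
  (∀ i j : Fin (k + q), i < j → (j : ℕ) < k → σ i < σ j) ∧
  (∀ i j : Fin (k + q), i < j → k ≤ (i : ℕ) → σ i < σ j)

instance (k q : ℕ) (σ : Equiv.Perm (Fin (k + q))) :
    Decidable (IsUnshuffle k q σ) := by
  unfold IsUnshuffle; infer_instance

/-- The Balavoine composition `P ∘ Q` of Leibniz-algebra cochains:
for `P ∈ C^p = Hom(⊗^{p+1} A, A)` and `Q ∈ C^q`,
`(P∘Q)(x₁,…,x_{p+q+1}) = Σ_{k=0}^{p} (-1)^{kq} Σ_{σ ∈ Sh(k,q)} sgn(σ)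
P(x_{σ(1)},…,x_{σ(k)}, Q(x_{σ(k+1)},…,x_{σ(k+q)}, x_{k+q+1}),
x_{k+q+2},…,x_{p+q+1})`. -/
def cochainComp {A : Type*} [AddCommGroup A] (p q : ℕ)
    (P : (Fin (p + 1) → A) → A) (Q : (Fin (q + 1) → A) → A) :
    (Fin (p + q + 1) → A) → A := fun x =>
  ∑ k : Fin (p + 1), ∑ σ ∈ Finset.univ.filter (IsUnshuffle (k : ℕ) q),
    ((-1 : ℤ) ^ ((k : ℕ) * q) * (Equiv.Perm.sign σ : ℤ)) •
      P (fun jj : Fin (p + 1) =>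
        if h1 : (jj : ℕ) < (k : ℕ) then
          x (Fin.castLE (by have := k.isLt; omega)
              (σ ⟨(jj : ℕ), by omega⟩))
        else if (jj : ℕ) = (k : ℕ) then
          Q (fun i : Fin (q + 1) =>
            if h3 : (i : ℕ) < q then
              x (Fin.castLE (by have := k.isLt; omega)
                  (σ ⟨(k : ℕ) + (i : ℕ), by omega⟩))
            else x ⟨(k : ℕ) + q, by have := k.isLt; omega⟩)
        else x ⟨(jj : ℕ) + q, by have := jj.isLt; omega⟩)

/-- The graded commutator bracket
`[P,Q]_C = P∘Q + (-1)^{pq+1} Q∘P` on Leibniz cochains. -/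
def cochainBracket {A : Type*} [AddCommGroup A] (p q : ℕ)
    (P : (Fin (p + 1) → A) → A) (Q : (Fin (q + 1) → A) → A) :
    (Fin (p + q + 1) → A) → A := fun x =>
  cochainComp p q P Q x +
    ((-1 : ℤ) ^ (p * q + 1)) •
      cochainComp q p Q P (fun i => x (Fin.cast (by omega) i))

/-- The differential `∂̄ = [μ, ·]_C` on cochains, where `μ ∈ C¹` is a
Leibniz algebra structure (written with a cast so that `∂̄` raises degree by
one). -/
def deltaBar {A : Type*} [AddCommGroup A] (p : ℕ)
    (μ : (Fin 2 → A) → A) (P : (Fin (p + 1) → A) → A) :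
    (Fin (p + 1 + 1) → A) → A := fun x =>
  cochainBracket 1 p μ P (fun i => x (Fin.cast (by omega) i))

variable {K : Type*} [Field K]
  {g : Type*} [AddCommGroup g] [Module K g]
  {h : Type*} [AddCommGroup h] [Module K h]

/-- The 1-cochain `μ_g + μ_h` on the direct sum Leibniz algebra `g ⊕ h`. -/
def muSum (Bg : g →ₗ[K] g →ₗ[K] g) (Bh : h →ₗ[K] h →ₗ[K] h) :
    (Fin 2 → g × h) → g × h := fun x =>
  (Bg (x 0).1 (x 1).1, Bh (x 0).2 (x 1).2)

/-- Membership in `L_p = C^p_>(g⊕h, h)`: cochains with values in `h` that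
vanish whenever all arguments lie in `h`. -/
def InL (p : ℕ) (P : (Fin (p + 1) → g × h) → g × h) : Prop :=
  (∀ x, (P x).1 = 0) ∧ (∀ x, (∀ i, (x i).1 = 0) → P x = 0)

section RelativeCochains

variable {A : Type*} [AddCommGroup A]

theorem cochainComp_mem {p q : ℕ} {P : (Fin (p + 1) → A) → A} {Q : (Fin (q + 1) → A) → A}
    {x : Fin (p + q + 1) → A} {S : AddSubgroup A}
    (hS : ∀ (v : Fin (p + 1) → A) (i : Fin (p + 1)) (y : Fin (q + 1) → A),
      (∀ j ≠ i, v j ∈ Set.range x) → (∀ t, y t ∈ Set.range x) → v i = Q y → P v ∈ S) :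
    cochainComp p q P Q x ∈ S := by
  refine S.sum_mem fun k _ => S.sum_mem fun σ _ => S.zsmul_mem ?_ _
  refine hS _ k (fun i : Fin (q + 1) =>
      if hi : (i : ℕ) < q then
        x (Fin.castLE (by have := k.isLt; omega) (σ ⟨(k : ℕ) + (i : ℕ), by omega⟩))
      else x ⟨(k : ℕ) + q, by have := k.isLt; omega⟩) ?_ ?_ ?_
  · intro j hj
    by_cases hjk : (j : ℕ) < k
    · exact ⟨_, by rw [dif_pos hjk]⟩
    · exact ⟨_, by rw [dif_neg hjk, if_neg (Fin.val_ne_of_ne hj)]⟩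
  · intro t
    by_cases htq : (t : ℕ) < q
    · exact ⟨_, by rw [dif_pos htq]⟩
    · exact ⟨_, by rw [dif_neg htq]⟩
  · rw [dif_neg (lt_irrefl _), if_pos rfl]

variable (H : AddSubgroup A)

/-- The cochains `C^n_>(A, H)`: those with values in `H` that vanish on `H^{⊗(n+1)}`. -/
def IsRelCochain {n : ℕ} (P : (Fin (n + 1) → A) → A) : Prop :=
  (∀ x, P x ∈ H) ∧ ∀ x, (∀ i, x i ∈ H) → P x = 0

variable {H}

namespace IsRelCochain

theorem reindex {m n : ℕ} {P : (Fin (n + 1) → A) → A} (hP : IsRelCochain H P)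
    (e : Fin (n + 1) → Fin (m + 1)) :
    IsRelCochain H fun x : Fin (m + 1) → A => P fun i => x (e i) :=
  ⟨fun _ => hP.1 _, fun _ hx => hP.2 _ fun i => hx (e i)⟩

theorem cochainComp {p q : ℕ} {P : (Fin (p + 1) → A) → A} {Q : (Fin (q + 1) → A) → A}
    (hP : IsRelCochain H P) (hQ : IsRelCochain H Q) :
    IsRelCochain H (cochainComp p q P Q) := by
  refine ⟨fun _ => cochainComp_mem fun v _ _ _ _ _ => hP.1 v, fun _ hx => ?_⟩
  refine AddSubgroup.mem_bot.1 (cochainComp_mem fun v i y hv hy hvi => ?_)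
  have hQy : Q y = 0 := hQ.2 y fun t => by obtain ⟨s, hs⟩ := hy t; exact hs ▸ hx s
  refine AddSubgroup.mem_bot.2 (hP.2 v fun j => ?_)
  by_cases hji : j = i
  · rw [hji, hvi, hQy]
    exact H.zero_mem
  · obtain ⟨t, ht⟩ := hv j hji
    exact ht ▸ hx t

theorem cochainBracket {p q : ℕ} {P : (Fin (p + 1) → A) → A} {Q : (Fin (q + 1) → A) → A}
    (hPQ : IsRelCochain H (_root_.cochainComp p q P Q))
    (hQP : IsRelCochain H (_root_.cochainComp q p Q P)) :
    IsRelCochain H (cochainBracket p q P Q) := by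
  have hQP' := hQP.reindex (Fin.cast (by omega) : Fin (q + p + 1) → Fin (p + q + 1))
  exact ⟨fun x => H.add_mem (hPQ.1 x) (H.zsmul_mem (hQP'.1 x) _),
    fun x hx => by
      have hQPx := hQP'.2 x hx
      beta_reduce at hQPx
      rw [_root_.cochainBracket, hPQ.2 x hx, hQPx, smul_zero, add_zero]⟩

theorem deltaBar {p : ℕ} {μ : (Fin 2 → A) → A} {P : (Fin (p + 1) → A) → A}
    (hP : IsRelCochain H P) (hμH : ∀ x i, x i ∈ H → μ x ∈ H) (hμ0 : ∀ x i, x i = 0 → μ x = 0) :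
    IsRelCochain H (deltaBar p μ P) := by
  have hμP : IsRelCochain H (_root_.cochainComp 1 p μ P) := by
    refine ⟨fun _ => cochainComp_mem fun v i y _ _ hvi => hμH v i (hvi ▸ hP.1 y), fun x hx => ?_⟩
    refine AddSubgroup.mem_bot.1 (cochainComp_mem fun v i y _ hy hvi => ?_)
    have hPy : P y = 0 := hP.2 y fun t => by obtain ⟨s, hs⟩ := hy t; exact hs ▸ hx s
    exact AddSubgroup.mem_bot.2 (hμ0 v i (hvi.trans hPy))
  have hPμ : IsRelCochain H (_root_.cochainComp p 1 P μ) := by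
    refine ⟨fun _ => cochainComp_mem fun v _ _ _ _ _ => hP.1 v, fun x hx => ?_⟩
    refine AddSubgroup.mem_bot.1 (cochainComp_mem fun v i y hv hy hvi => ?_)
    refine AddSubgroup.mem_bot.2 (hP.2 v fun j => ?_)
    by_cases hji : j = i
    · obtain ⟨s, hs⟩ := hy 0
      exact hji ▸ hvi ▸ hμH y 0 (hs ▸ hx s)
    · obtain ⟨t, ht⟩ := hv j hji
      exact ht ▸ hx t
  exact (hμP.cochainBracket hPμ).reindex (Fin.cast (by omega))

end IsRelCochain

theorem cochainComp_zero_eq_zero {q : ℕ} {P : (Fin 1 → A) → A} {Q : (Fin (q + 1) → A) → A}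
    (hP : ∀ x, (∀ i, x i ∈ H) → P x = 0) (hQ : ∀ x, Q x ∈ H) (x : Fin (0 + q + 1) → A) :
    cochainComp 0 q P Q x = 0 :=
  AddSubgroup.mem_bot.1 <| cochainComp_mem fun v i y _ _ hvi =>
    AddSubgroup.mem_bot.2 <| hP v fun j => (Fin.ext (by omega) : i = j) ▸ hvi ▸ hQ y

theorem cochainBracket_zero_zero_eq_zero {P Q : (Fin 1 → A) → A}
    (hP : IsRelCochain H P) (hQ : IsRelCochain H Q) (x : Fin 1 → A) :
    cochainBracket 0 0 P Q x = 0 := by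
  rw [cochainBracket, cochainComp_zero_eq_zero hP.2 hQ.1, cochainComp_zero_eq_zero hQ.2 hP.1,
    smul_zero, add_zero]

end RelativeCochains

theorem inL_iff_isRelCochain {p : ℕ} {P : (Fin (p + 1) → g × h) → g × h} :
    InL p P ↔ IsRelCochain (AddMonoidHom.fst g h).ker P :=
  Iff.rfl

theorem muSum_mem_ker_fst (Bg : g →ₗ[K] g →ₗ[K] g) (Bh : h →ₗ[K] h →ₗ[K] h)
    (x : Fin 2 → g × h) (i : Fin 2) (hx : x i ∈ (AddMonoidHom.fst g h).ker) :
    muSum Bg Bh x ∈ (AddMonoidHom.fst g h).ker := by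
  rw [AddMonoidHom.mem_ker] at hx ⊢
  fin_cases i <;> simp_all [muSum]

theorem muSum_eq_zero (Bg : g →ₗ[K] g →ₗ[K] g) (Bh : h →ₗ[K] h →ₗ[K] h)
    (x : Fin 2 → g × h) (i : Fin 2) (hx : x i = 0) : muSum Bg Bh x = 0 := by
  fin_cases i <;> simp_all [muSum]

theorem L_is_sub_DGLA_general
    (Bg : g →ₗ[K] g →ₗ[K] g)
    (Bh : h →ₗ[K] h →ₗ[K] h) :
    -- closed under the graded bracket
    (∀ (p q : ℕ) (P : (Fin (p + 1) → g × h) → g × h)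
        (Q : (Fin (q + 1) → g × h) → g × h),
      InL p P → InL q Q → InL (p + q) (cochainBracket p q P Q)) ∧
    -- closed under the differential
    (∀ (p : ℕ) (P : (Fin (p + 1) → g × h) → g × h),
      InL p P → InL (p + 1) (deltaBar p (muSum Bg Bh) P)) ∧
    -- the degree-0 part is abelian
    (∀ P Q : (Fin 1 → g × h) → g × h, InL 0 P → InL 0 Q →
      ∀ x, cochainBracket 0 0 P Q x = 0) := by
  simp only [inL_iff_isRelCochain]
  exact ⟨fun _ _ _ _ hP hQ => (hP.cochainComp hQ).cochainBracket (hQ.cochainComp hP),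
    fun _ _ hP => hP.deltaBar (muSum_mem_ker_fst Bg Bh) (muSum_eq_zero Bg Bh),
    fun _ _ hP hQ => cochainBracket_zero_zero_eq_zero hP hQ⟩

/-- Lemma 4.2: `L = ⊕ₖ C^k_>(g⊕h, h)` is closed under the graded bracket
`[·,·]_C` and under the differential `∂̄ = [μ_g + μ_h, ·]_C`, hence is a
sub-DGLA of `(C(g⊕h, g⊕h), [·,·]_C, ∂̄)`; moreover its degree-0 part
`L₀ = Hom(g, h)` is abelian. -/
theorem L_is_sub_DGLA
    (Bg : g →ₗ[K] g →ₗ[K] g)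
    (hg : ∀ x y z : g, Bg x (Bg y z) = Bg (Bg x y) z + Bg y (Bg x z))
    (Bh : h →ₗ[K] h →ₗ[K] h)
    (hh : ∀ a b c : h, Bh a (Bh b c) = Bh (Bh a b) c + Bh b (Bh a c)) :
    -- closed under the graded bracket
    (∀ (p q : ℕ) (P : (Fin (p + 1) → g × h) → g × h)
        (Q : (Fin (q + 1) → g × h) → g × h),
      InL p P → InL q Q → InL (p + q) (cochainBracket p q P Q)) ∧
    -- closed under the differential
    (∀ (p : ℕ) (P : (Fin (p + 1) → g × h) → g × h),
      InL p P → InL (p + 1) (deltaBar p (muSum Bg Bh) P)) ∧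
    -- the degree-0 part is abelian
    (∀ P Q : (Fin 1 → g × h) → g × h, InL 0 P → InL 0 Q →
      ∀ x, cochainBracket 0 0 P Q x = 0) :=
  L_is_sub_DGLA_general Bg Bh
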